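/- arXiv:2602.01337 — 2 statements merged into one kernel-verified Lean document; each statement's English description precedes it below -/
import Mathlib

section
/- Let P be a real symmetric n×n matrix, P₊ a real symmetric positive-definite n×n matrix, A a real n×n matrix and C a real m×n matrix. There exists a real n×m matrix L such that P − (A + LC)ᵀP₊(A + LC) ≻ 0 if and only if P ≻ 0 and xᵀ(P − AᵀP₊A)x > 0 for every nonzero x ∈ ℝⁿ with Cx = 0. -/
/-!
Necessity: the gain does not act on `ker C`, and `P` dominates `P - XᵀP₊X` because `XᵀP₊X ⪰ 0`.
Sufficiency: split `ℝⁿ = ker C ⊕ (ker C)^⊥`, the orthogonal complement taken with respect to the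
inner product `P`, and let `π` be the projection onto `ker C` along it. Since `A ∘ π - A` vanishes
on `ker C`, it factors as `L C`, so `A + L C = A ∘ π`. For `x = u + v` the Lyapunov form then
splits as `uᵀ(P - AᵀP₊A)u + vᵀPv`, which is positive unless `x = 0`.
-/

open Matrix

theorem LinearMap.exists_comp_eq_of_ker_le {K V W U : Type*} [Field K] [AddCommGroup V]
    [Module K V] [AddCommGroup W] [Module K W] [AddCommGroup U] [Module K U]
    {f : V →ₗ[K] U} {g : V →ₗ[K] W} (hle : ker g ≤ ker f) : ∃ h : W →ₗ[K] U, h ∘ₗ g = f := by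
  obtain ⟨h, hh⟩ := LinearMap.exists_extend
    ((ker g).liftQ f hle ∘ₗ g.quotKerEquivRange.symm.toLinearMap)
  refine ⟨h, LinearMap.ext fun x => ?_⟩
  have := congr($hh ⟨g x, g.mem_range_self x⟩)
  simp only [LinearMap.comp_apply, Submodule.subtype_apply, LinearEquiv.coe_coe] at this
  rwa [g.quotKerEquivRange_symm_apply_image, Submodule.mkQ_apply, Submodule.liftQ_apply] at this

namespace Matrix

variable {K ι κ μ : Type*} [Fintype ι]

theorem exists_mul_eq_of_mulVec_eq_zero [DecidableEq ι] [Field K] [Fintype κ] [DecidableEq κ]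
    {M : Matrix μ ι K} {C : Matrix κ ι K} (h : ∀ x, C *ᵥ x = 0 → M *ᵥ x = 0) :
    ∃ L : Matrix μ κ K, L * C = M := by
  obtain ⟨g, hg⟩ := LinearMap.exists_comp_eq_of_ker_le (f := toLin' M) (g := toLin' C) h
  exact ⟨LinearMap.toMatrix' g, toLin'.injective (by rw [toLin'_mul, toLin'_toMatrix', hg])⟩

theorem exists_add_mul_mulVec_eq [DecidableEq ι] [Field K] [Fintype κ] [DecidableEq κ]
    (A : Matrix ι ι K) {C : Matrix κ ι K} (π : (ι → K) →ₗ[K] ι → K)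
    (hπ : ∀ x, C *ᵥ x = 0 → π x = x) :
    ∃ L : Matrix ι κ K, ∀ x, (A + L * C) *ᵥ x = A *ᵥ π x := by
  obtain ⟨L, hL⟩ := exists_mul_eq_of_mulVec_eq_zero
    (M := LinearMap.toMatrix' (toLin' A ∘ₗ π) - A) (C := C) fun x hx => by
      simp [sub_mulVec, hπ x hx]
  refine ⟨L, fun x => ?_⟩
  simp [hL]

theorem dotProduct_mulVec_sub_transpose_mul_mul [CommRing K] (P Q X : Matrix ι ι K)
    (x : ι → K) :
    x ⬝ᵥ ((P - Xᵀ * Q * X) *ᵥ x) = x ⬝ᵥ (P *ᵥ x) - (X *ᵥ x) ⬝ᵥ (Q *ᵥ (X *ᵥ x)) := by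
  rw [sub_mulVec, dotProduct_sub, ← mulVec_mulVec, ← mulVec_mulVec, dotProduct_mulVec x Xᵀ,
    vecMul_transpose]

theorem dotProduct_mulVec_add_of_dotProduct_mulVec_eq_zero [CommRing K] {P : Matrix ι ι K}
    (hP : P.IsSymm) {u v : ι → K} (huv : u ⬝ᵥ (P *ᵥ v) = 0) :
    (u + v) ⬝ᵥ (P *ᵥ (u + v)) = u ⬝ᵥ (P *ᵥ u) + v ⬝ᵥ (P *ᵥ v) := by
  have hvu : v ⬝ᵥ (P *ᵥ u) = 0 := by
    rwa [dotProduct_mulVec, ← mulVec_transpose, hP.eq, dotProduct_comm]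
  simp only [mulVec_add, add_dotProduct, dotProduct_add, huv, hvu]
  ring

theorem PosDef.isCompl_orthogonal [DecidableEq ι] {P : Matrix ι ι ℝ} (hP : P.PosDef)
    (W : Submodule ℝ (ι → ℝ)) : IsCompl W ((toBilin' P).orthogonal W) := by
  have hsymm : (toBilin' P).IsSymm :=
    isSymm_toBilin'_iff_isSymm.2 (isHermitian_iff_isSymm.1 hP.isHermitian)
  refine (LinearMap.BilinForm.isCompl_orthogonal_iff_disjoint hsymm.isRefl).2 ?_
  refine Submodule.disjoint_def.2 fun x hxW hxW' => ?_
  by_contra hx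
  have := hP.dotProduct_mulVec_pos hx
  rw [star_trivial, ← toBilin'_apply', LinearMap.BilinForm.mem_orthogonal_iff.1 hxW' x hxW] at this
  exact this.false

theorem PosDef.of_sub_transpose_mul_mul {P Q X : Matrix ι ι ℝ} (h : (P - Xᵀ * Q * X).PosDef)
    (hQ : Q.PosSemidef) : P.PosDef := by
  simpa using h.add_posSemidef (hQ.conjTranspose_mul_mul_same X)

theorem exists_posDef_sub_transpose_mul_mul [DecidableEq ι] [Fintype κ] [DecidableEq κ]
    {P Q : Matrix ι ι ℝ} (A : Matrix ι ι ℝ) {C : Matrix κ ι ℝ} (hP : P.PosDef)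
    (hQ : Q.IsHermitian) (hker : ∀ x, x ≠ 0 → C *ᵥ x = 0 → 0 < x ⬝ᵥ ((P - Aᵀ * Q * A) *ᵥ x)) :
    ∃ L : Matrix ι κ ℝ, (P - (A + L * C)ᵀ * Q * (A + L * C)).PosDef := by
  set W := LinearMap.ker (toLin' C)
  set W' := (toBilin' P).orthogonal W
  have hW := hP.isCompl_orthogonal W
  obtain ⟨L, hL⟩ := exists_add_mul_mulVec_eq A (W.projection W' hW)
    fun x hx => Submodule.projection_apply_of_mem_left hW hx
  refine ⟨L, .of_dotProduct_mulVec_pos ?_ fun x hx => ?_⟩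
  · simpa using hP.isHermitian.sub (isHermitian_conjTranspose_mul_mul (A + L * C) hQ)
  rw [star_trivial, dotProduct_mulVec_sub_transpose_mul_mul, hL]
  set u := W.projection W' hW x
  set v := W'.projection W hW.symm x
  have hux : u + v = x := Submodule.projection_add_projection_eq_self hW x
  have hu : u ∈ W := Submodule.projection_apply_mem hW x
  have hv : v ∈ W' := Submodule.projection_apply_mem hW.symm x
  have hsplit : x ⬝ᵥ (P *ᵥ x) = u ⬝ᵥ (P *ᵥ u) + v ⬝ᵥ (P *ᵥ v) := by
    rw [← hux]
    refine dotProduct_mulVec_add_of_dotProduct_mulVec_eq_zero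
      (isHermitian_iff_isSymm.1 hP.isHermitian) ?_
    rw [← toBilin'_apply']
    exact LinearMap.BilinForm.mem_orthogonal_iff.1 hv u hu
  rw [hsplit]
  rcases eq_or_ne u 0 with hu0 | hu0
  · have hv0 : v ≠ 0 := fun hv0 => hx (by rw [← hux, hu0, hv0, add_zero])
    simpa [hu0] using hP.dotProduct_mulVec_pos hv0
  · have hWu := hker u hu0 hu
    rw [dotProduct_mulVec_sub_transpose_mul_mul] at hWu
    have hPv := hP.posSemidef.dotProduct_mulVec_nonneg v
    rw [star_trivial] at hPv
    linarith

end Matrix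

theorem stmt_14_general {n m : ℕ} (P Pplus A : Matrix (Fin n) (Fin n) ℝ)
    (C : Matrix (Fin m) (Fin n) ℝ) (hPplus : Pplus.PosDef) :
    (∃ L : Matrix (Fin n) (Fin m) ℝ,
        (P - (A + L * C)ᵀ * Pplus * (A + L * C)).PosDef) ↔
      (P.PosDef ∧ ∀ x : Fin n → ℝ, x ≠ 0 → C *ᵥ x = 0 →
        0 < x ⬝ᵥ ((P - Aᵀ * Pplus * A) *ᵥ x)) := by
  refine ⟨fun ⟨L, hL⟩ => ⟨hL.of_sub_transpose_mul_mul hPplus.posSemidef, fun x hx hCx => ?_⟩,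
    fun ⟨hP, hker⟩ => exists_posDef_sub_transpose_mul_mul A hP hPplus.isHermitian hker⟩
  have hgain : (A + L * C) *ᵥ x = A *ᵥ x := by
    rw [add_mulVec, ← mulVec_mulVec, hCx, mulVec_zero, add_zero]
  have hpos := hL.dotProduct_mulVec_pos hx
  rwa [star_trivial, dotProduct_mulVec_sub_transpose_mul_mul, hgain,
    ← dotProduct_mulVec_sub_transpose_mul_mul] at hpos

/-- Observer-gain elimination: For symmetric `P` and symmetric positive
definite `P₊`, there is `L` with `P − (A + LC)ᵀP₊(A + LC) ≻ 0` iff `P ≻ 0` and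
`xᵀ(P − AᵀP₊A)x > 0` for all nonzero `x` with `Cx = 0`. -/
theorem stmt_14 {n m : ℕ} (P Pplus A : Matrix (Fin n) (Fin n) ℝ)
    (C : Matrix (Fin m) (Fin n) ℝ) (hP : P.IsSymm) (hPplus : Pplus.PosDef) :
    (∃ L : Matrix (Fin n) (Fin m) ℝ,
        (P - (A + L * C)ᵀ * Pplus * (A + L * C)).PosDef) ↔
      (P.PosDef ∧ ∀ x : Fin n → ℝ, x ≠ 0 → C *ᵥ x = 0 →
        0 < x ⬝ᵥ ((P - Aᵀ * Pplus * A) *ᵥ x)) :=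
  stmt_14_general P Pplus A C hPplus
end

section
/- Let P be a real symmetric n×n matrix, P₊ a real symmetric positive-definite n×n matrix, A a real n×n matrix and B a real n×m matrix. There exists a real m×n matrix K such that P − (A + BK)ᵀP₊(A + BK) ≻ 0 if and only if P ≻ 0 and yᵀ(P₊⁻¹ − AP⁻¹Aᵀ)y > 0 for every nonzero y ∈ ℝⁿ with Bᵀy = 0. -/
/-!
Both directions rest on the Cauchy–Schwarz inequality `(a ⬝ b)² ≤ (aᵀ M⁻¹ a) (bᵀ M b)` for
`M ≻ 0`. Write `F = A + B K`. If `P - Fᵀ P₊ F ≻ 0`, then `P ≻ 0`, and for `y ∈ ker Bᵀ` we have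
`Fᵀ y = Aᵀ y`; Cauchy–Schwarz for `P₊` at `y` and `F P⁻¹ Aᵀ y` gives `yᵀ A P⁻¹ Aᵀ y < yᵀ P₊⁻¹ y`.
Conversely, since `range (Bᵀ P₊ B) = range Bᵀ` we can choose `K` with `Bᵀ P₊ F = 0`, i.e. `B K` is
minus the `P₊`-orthogonal projection of `A` onto `range B`. For `x ≠ 0` the vector `y = P₊ F x`
then lies in `ker Bᵀ` and `(F x)ᵀ P₊ (F x) = yᵀ A x`, so Cauchy–Schwarz for `P` and the hypothesis
at `y` give `(F x)ᵀ P₊ (F x) < xᵀ P x`.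
-/

open Matrix

namespace Matrix
variable {m n p : Type*}

theorem exists_mul_eq_of_range_le [Fintype n] [Fintype p] {R : Type*} [Field R]
    {X : Matrix m n R} {Y : Matrix m p R}
    (h : LinearMap.range X.mulVecLin ≤ LinearMap.range Y.mulVecLin) :
    ∃ Z : Matrix p n R, Y * Z = X := by
  classical
  obtain ⟨g, hg⟩ := Module.projective_lifting_property Y.mulVecLin.rangeRestrict
    (X.mulVecLin.codRestrict _ fun v => h ⟨v, rfl⟩) (LinearMap.surjective_rangeRestrict _)
  refine ⟨LinearMap.toMatrix' g, toLin'.injective ?_⟩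
  rw [toLin'_mul, toLin'_toMatrix']
  exact LinearMap.ext fun v => congrArg Subtype.val (LinearMap.congr_fun hg v)

theorem dotProduct_transpose_mul_mul_mulVec [Fintype m] [Fintype n] {R : Type*} [CommSemiring R]
    (F : Matrix m n R) (M : Matrix m m R) (x : n → R) :
    x ⬝ᵥ ((Fᵀ * M * F) *ᵥ x) = (F *ᵥ x) ⬝ᵥ (M *ᵥ (F *ᵥ x)) := by
  rw [← mulVec_mulVec, ← mulVec_mulVec, dotProduct_mulVec, vecMul_transpose]

theorem dotProduct_sub_mul_mul_transpose_mulVec [Fintype m] [Fintype n] {R : Type*} [CommRing R]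
    (M : Matrix m m R) (A : Matrix m n R) (Q : Matrix n n R) (y : m → R) :
    y ⬝ᵥ ((M - A * Q * Aᵀ) *ᵥ y) = y ⬝ᵥ (M *ᵥ y) - (Aᵀ *ᵥ y) ⬝ᵥ (Q *ᵥ (Aᵀ *ᵥ y)) := by
  rw [sub_mulVec, dotProduct_sub, ← dotProduct_transpose_mul_mul_mulVec, transpose_transpose]

theorem PosSemidef.transpose_mul_mul_same [Fintype m] [Fintype n] {M : Matrix m m ℝ}
    (hM : M.PosSemidef) (F : Matrix m n ℝ) : (Fᵀ * M * F).PosSemidef := by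
  simpa only [conjTranspose_eq_transpose_of_trivial] using hM.conjTranspose_mul_mul_same F

theorem IsSymm.dotProduct_mulVec_comm [Fintype n] {R : Type*} [CommSemiring R]
    {M : Matrix n n R} (hM : M.IsSymm) (x y : n → R) : x ⬝ᵥ (M *ᵥ y) = (M *ᵥ x) ⬝ᵥ y := by
  rw [dotProduct_mulVec, ← mulVec_transpose, hM.eq]

theorem PosSemidef.sq_dotProduct_mulVec_le [Fintype n] {M : Matrix n n ℝ} (hM : M.PosSemidef)
    (a b : n → ℝ) :
    (a ⬝ᵥ (M *ᵥ b)) ^ 2 ≤ (a ⬝ᵥ (M *ᵥ a)) * (b ⬝ᵥ (M *ᵥ b)) := by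
  classical
  simpa only [toBilin'_apply'] using M.toBilin'.apply_sq_le_of_symm
    (fun x => by simpa [toBilin'_apply'] using hM.dotProduct_mulVec_nonneg x)
    (LinearMap.BilinForm.isSymm_iff.mp <|
      isSymm_toBilin'_iff_isSymm.mpr (isHermitian_iff_isSymm.mp hM.isHermitian)) a b

theorem PosDef.sq_dotProduct_le [Fintype n] [DecidableEq n] {M : Matrix n n ℝ} (hM : M.PosDef)
    (a b : n → ℝ) : (a ⬝ᵥ b) ^ 2 ≤ (a ⬝ᵥ (M⁻¹ *ᵥ a)) * (b ⬝ᵥ (M *ᵥ b)) := by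
  have hsymm := isHermitian_iff_isSymm.mp hM.isHermitian
  have hMa : M *ᵥ (M⁻¹ *ᵥ a) = a := by
    rw [mulVec_mulVec, mul_nonsing_inv _ hM.det_pos.ne'.isUnit, one_mulVec]
  have hcs := hM.posSemidef.sq_dotProduct_mulVec_le (M⁻¹ *ᵥ a) b
  rwa [hsymm.dotProduct_mulVec_comm _ b, hMa, dotProduct_comm _ a] at hcs

theorem PosDef.ker_mulVecLin_transpose_mul_mul_self [Fintype m] [Fintype p] {M : Matrix m m ℝ}
    (hM : M.PosDef) (B : Matrix m p ℝ) :
    LinearMap.ker (Bᵀ * M * B).mulVecLin = LinearMap.ker B.mulVecLin := by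
  ext x
  simp only [LinearMap.mem_ker, mulVecLin_apply]
  refine ⟨fun h => ?_, fun h => by rw [← mulVec_mulVec, h, mulVec_zero]⟩
  by_contra hBx
  have hpos := hM.dotProduct_mulVec_pos hBx
  rw [star_trivial, ← dotProduct_transpose_mul_mul_mulVec, h, dotProduct_zero] at hpos
  exact hpos.false

theorem PosDef.range_mulVecLin_transpose_mul_mul_self [Fintype m] [Fintype p] {M : Matrix m m ℝ}
    (hM : M.PosDef) (B : Matrix m p ℝ) :
    LinearMap.range (Bᵀ * M * B).mulVecLin = LinearMap.range Bᵀ.mulVecLin := by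
  refine Submodule.eq_of_le_of_finrank_eq ?_ ?_
  · rw [Matrix.mul_assoc, mulVecLin_mul]
    exact LinearMap.range_comp_le_range _ _
  · have := (Bᵀ * M * B).mulVecLin.finrank_range_add_finrank_ker
    rw [hM.ker_mulVecLin_transpose_mul_mul_self, ← B.mulVecLin.finrank_range_add_finrank_ker]
      at this
    change _ = Bᵀ.rank
    rw [rank_transpose]
    exact Nat.add_right_cancel this

theorem PosDef.exists_transpose_mul_mul_add_mul_eq_zero [Fintype m] [Fintype n] [Fintype p]
    {M : Matrix m m ℝ} (hM : M.PosDef) (A : Matrix m n ℝ) (B : Matrix m p ℝ) :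
    ∃ K : Matrix p n ℝ, Bᵀ * M * (A + B * K) = 0 := by
  obtain ⟨Z, hZ⟩ := exists_mul_eq_of_range_le (X := Bᵀ * M * A) (Y := Bᵀ * M * B) <| by
    rw [hM.range_mulVecLin_transpose_mul_mul_self, Matrix.mul_assoc, mulVecLin_mul]
    exact LinearMap.range_comp_le_range _ _
  refine ⟨-Z, ?_⟩
  rw [Matrix.mul_add, Matrix.mul_neg, Matrix.mul_neg, ← Matrix.mul_assoc, hZ, add_neg_cancel]

theorem PosDef.dotProduct_transpose_mulVec_lt_of_posDef_sub [Fintype m] [Fintype n]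
    [DecidableEq m] [DecidableEq n] {P : Matrix n n ℝ} {M : Matrix m m ℝ} {F : Matrix m n ℝ}
    (hP : P.PosDef) (hM : M.PosDef) (hF : (P - Fᵀ * M * F).PosDef) {y : m → ℝ} (hy : y ≠ 0) :
    (Fᵀ *ᵥ y) ⬝ᵥ (P⁻¹ *ᵥ (Fᵀ *ᵥ y)) < y ⬝ᵥ (M⁻¹ *ᵥ y) := by
  set w := Fᵀ *ᵥ y
  set x := P⁻¹ *ᵥ w
  have hPx : P *ᵥ x = w := by
    rw [mulVec_mulVec, mul_nonsing_inv _ hP.det_pos.ne'.isUnit, one_mulVec]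
  have hMy : 0 < y ⬝ᵥ (M⁻¹ *ᵥ y) := by simpa using hM.inv.dotProduct_mulVec_pos hy
  rcases eq_or_ne x 0 with hx | hx
  · rwa [hx, dotProduct_zero]
  have hs : 0 < w ⬝ᵥ x := by simpa [hPx, dotProduct_comm] using hP.dotProduct_mulVec_pos hx
  have hlt : (F *ᵥ x) ⬝ᵥ (M *ᵥ (F *ᵥ x)) < w ⬝ᵥ x := by
    have := hF.dotProduct_mulVec_pos hx
    rw [star_trivial, sub_mulVec, dotProduct_sub, dotProduct_transpose_mul_mul_mulVec, hPx,
      dotProduct_comm x] at this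
    linarith
  have hcs := hM.sq_dotProduct_le y (F *ᵥ x)
  rw [dotProduct_mulVec y F, ← mulVec_transpose] at hcs
  nlinarith [mul_lt_mul_of_pos_left hlt hMy]

theorem posDef_sub_transpose_mul_mul_of_transpose_mul_mul_eq_zero [Fintype m] [Fintype n]
    [Fintype p] [DecidableEq m] [DecidableEq n] {P : Matrix n n ℝ} {M : Matrix m m ℝ}
    {A : Matrix m n ℝ} {B : Matrix m p ℝ} {K : Matrix p n ℝ}
    (hP : P.PosDef) (hM : M.PosDef) (hK : Bᵀ * M * (A + B * K) = 0)
    (hA : ∀ y, y ≠ 0 → Bᵀ *ᵥ y = 0 → (Aᵀ *ᵥ y) ⬝ᵥ (P⁻¹ *ᵥ (Aᵀ *ᵥ y)) < y ⬝ᵥ (M⁻¹ *ᵥ y)) :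
    (P - (A + B * K)ᵀ * M * (A + B * K)).PosDef := by
  set F := A + B * K
  refine .of_dotProduct_mulVec_pos
    (hP.isHermitian.sub (hM.posSemidef.transpose_mul_mul_same F).isHermitian) fun x hx => ?_
  rw [star_trivial, sub_mulVec, dotProduct_sub, dotProduct_transpose_mul_mul_mulVec, sub_pos]
  have hxPx : 0 < x ⬝ᵥ (P *ᵥ x) := by simpa using hP.dotProduct_mulVec_pos hx
  set z := F *ᵥ x
  rcases eq_or_ne z 0 with hz | hz
  · rwa [hz, mulVec_zero, dotProduct_zero]
  set y := M *ᵥ z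
  have hMy : M⁻¹ *ᵥ y = z := by
    rw [mulVec_mulVec, nonsing_inv_mul _ hM.det_pos.ne'.isUnit, one_mulVec]
  have hy : y ≠ 0 := fun h => hz (by rw [← hMy, h, mulVec_zero])
  have hBy : Bᵀ *ᵥ y = 0 := by
    rw [mulVec_mulVec, mulVec_mulVec, hK, zero_mulVec]
  have hs : z ⬝ᵥ y = (Aᵀ *ᵥ y) ⬝ᵥ x := by
    have hz' : z = A *ᵥ x + B *ᵥ (K *ᵥ x) := by rw [mulVec_mulVec, ← add_mulVec]
    rw [dotProduct_comm, hz', dotProduct_add, dotProduct_mulVec y B, ← mulVec_transpose, hBy,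
      zero_dotProduct, add_zero, dotProduct_mulVec, ← mulVec_transpose]
  have hlt := hA y hy hBy
  rw [hMy, dotProduct_comm y z] at hlt
  have hcs := hP.sq_dotProduct_le (Aᵀ *ᵥ y) x
  rw [← hs] at hcs
  have hzy : 0 < z ⬝ᵥ y := by simpa using hM.dotProduct_mulVec_pos hz
  nlinarith [mul_lt_mul_of_pos_right hlt hxPx]

end Matrix

theorem stmt_15_general {n m : ℕ} (P Pplus A : Matrix (Fin n) (Fin n) ℝ)
    (B : Matrix (Fin n) (Fin m) ℝ) (hPplus : Pplus.PosDef) :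
    (∃ K : Matrix (Fin m) (Fin n) ℝ,
        (P - (A + B * K)ᵀ * Pplus * (A + B * K)).PosDef) ↔
      (P.PosDef ∧ ∀ y : Fin n → ℝ, y ≠ 0 → Bᵀ *ᵥ y = 0 →
        0 < y ⬝ᵥ ((Pplus⁻¹ - A * P⁻¹ * Aᵀ) *ᵥ y)) := by
  simp only [dotProduct_sub_mul_mul_transpose_mulVec, sub_pos]
  constructor
  · rintro ⟨K, hK⟩
    have hP : P.PosDef := by
      simpa using hK.add_posSemidef (hPplus.posSemidef.transpose_mul_mul_same (A + B * K))
    refine ⟨hP, fun y hy hBy => ?_⟩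
    have hFy : (A + B * K)ᵀ *ᵥ y = Aᵀ *ᵥ y := by
      rw [transpose_add, transpose_mul, add_mulVec, ← mulVec_mulVec, hBy, mulVec_zero, add_zero]
    simpa only [hFy] using hP.dotProduct_transpose_mulVec_lt_of_posDef_sub hPplus hK hy
  · rintro ⟨hP, hA⟩
    obtain ⟨K, hK⟩ := hPplus.exists_transpose_mul_mul_add_mul_eq_zero A B
    exact ⟨K, posDef_sub_transpose_mul_mul_of_transpose_mul_mul_eq_zero hP hPplus hK hA⟩

/-- Controller-gain elimination: For symmetric `P` and symmetric positive
definite `P₊`, there is `K` with `P − (A + BK)ᵀP₊(A + BK) ≻ 0` iff `P ≻ 0` and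
`yᵀ(P₊⁻¹ − AP⁻¹Aᵀ)y > 0` for all nonzero `y` with `Bᵀy = 0`. -/
theorem stmt_15 {n m : ℕ} (P Pplus A : Matrix (Fin n) (Fin n) ℝ)
    (B : Matrix (Fin n) (Fin m) ℝ) (hP : P.IsSymm) (hPplus : Pplus.PosDef) :
    (∃ K : Matrix (Fin m) (Fin n) ℝ,
        (P - (A + B * K)ᵀ * Pplus * (A + B * K)).PosDef) ↔
      (P.PosDef ∧ ∀ y : Fin n → ℝ, y ≠ 0 → Bᵀ *ᵥ y = 0 →
        0 < y ⬝ᵥ ((Pplus⁻¹ - A * P⁻¹ * Aᵀ) *ᵥ y)) :=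
  stmt_15_general P Pplus A B hPplus
end
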